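/- Let G and H be nontrivial connected graphs. Then the cycle convexity number of the strong product G ⊠ H equals the independence number of G ⊠ H: C_cc(G ⊠ H) = α(G ⊠ H). -/

import Mathlib

open SimpleGraph

variable {V α β : Type*}

/-- A set `S` is cycle convex in `G` if no vertex outside `S` lies on a cycle in the
subgraph induced by `S ∪ {w}`. -/
def CycleConvex (G : SimpleGraph V) (S : Set V) : Prop :=
  ∀ w : V, w ∉ S →
    ∀ c : (G.induce (insert w S)).Walk ⟨w, Set.mem_insert w S⟩ ⟨w, Set.mem_insert w S⟩,
      ¬ c.IsCycle

/-- The cycle convex hull of `S`: the smallest cycle convex set containing `S`. -/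
def cycleHull (G : SimpleGraph V) (S : Set V) : Set V :=
  ⋂₀ {T : Set V | S ⊆ T ∧ CycleConvex G T}

/-- The cycle hull number: minimum size of a set whose cycle convex hull is everything. -/
noncomputable def cycleHullNumber (G : SimpleGraph V) : ℕ :=
  sInf {n : ℕ | ∃ S : Set V, S.ncard = n ∧ cycleHull G S = Set.univ}

/-- The cycle convexity number: maximum size of a proper cycle convex set. -/
noncomputable def cycleConvexityNumber (G : SimpleGraph V) : ℕ :=
  sSup {n : ℕ | ∃ S : Set V, S.ncard = n ∧ CycleConvex G S ∧ S ≠ Set.univ}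

/-- The independence number of a graph. -/
noncomputable def indepNumber (G : SimpleGraph V) : ℕ :=
  sSup {n : ℕ | ∃ S : Set V, S.ncard = n ∧ S.Pairwise fun a b => ¬ G.Adj a b}

/-- The strong product of two simple graphs. -/
def strongProd (G : SimpleGraph α) (H : SimpleGraph β) : SimpleGraph (α × β) where
  Adj x y := (G.Adj x.1 y.1 ∧ x.2 = y.2) ∨ (x.1 = y.1 ∧ H.Adj x.2 y.2) ∨
    (G.Adj x.1 y.1 ∧ H.Adj x.2 y.2)
  symm := ⟨fun x y h => by
    rcases h with ⟨h1, h2⟩ | ⟨h1, h2⟩ | ⟨h1, h2⟩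
    · exact Or.inl ⟨h1.symm, h2.symm⟩
    · exact Or.inr (Or.inl ⟨h1.symm, h2.symm⟩)
    · exact Or.inr (Or.inr ⟨h1.symm, h2.symm⟩)⟩
  loopless := ⟨fun x h => by
    rcases h with ⟨h1, _⟩ | ⟨_, h2⟩ | ⟨h1, _⟩
    · exact G.ne_of_adj h1 rfl
    · exact H.ne_of_adj h2 rfl
    · exact G.ne_of_adj h1 rfl⟩

/-- The lexicographic product of two simple graphs. -/
def lexProd (G : SimpleGraph α) (H : SimpleGraph β) : SimpleGraph (α × β) where
  Adj x y := G.Adj x.1 y.1 ∨ (x.1 = y.1 ∧ H.Adj x.2 y.2)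
  symm := ⟨fun x y h => by
    rcases h with h1 | ⟨h1, h2⟩
    · exact Or.inl h1.symm
    · exact Or.inr ⟨h1.symm, h2.symm⟩⟩
  loopless := ⟨fun x h => by
    rcases h with h1 | ⟨_, h2⟩
    · exact G.ne_of_adj h1 rfl
    · exact H.ne_of_adj h2 rfl⟩

/-!
A cycle convex set containing an edge `xy` contains every common neighbour `w` of `x` and `y`,
because `wxyw` is a triangle. In `G ⊠ H` this forces a cycle convex set containing an edge to
contain a vertical edge `(a, b)(a, b')`, then the whole rows of `b` and `b'` (walking along `G`),
and then every row (walking along `H`). So the proper cycle convex sets of `G ⊠ H` are exactly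
its independent sets (which are proper, as `G ⊠ H` has an edge): an independent set is cycle
convex as the second and third vertices of a cycle through an outside vertex would be two
adjacent vertices of the set.
-/

namespace SimpleGraph

lemma Preconnected.induction_on {G : SimpleGraph V} (hG : G.Preconnected) {P : V → Prop}
    (step : ∀ ⦃x y⦄, G.Adj x y → P x → P y) {a : V} (ha : P a) (b : V) : P b := by
  induction (G.reachable_iff_reflTransGen a b).1 (hG a b) with
  | refl => exact ha
  | tail _ hxy ih => exact step hxy ih

lemma Walk.isCycle_triangle {G : SimpleGraph V} {u v w : V} (huv : G.Adj u v)
    (hvw : G.Adj v w) (hwu : G.Adj w u) : (cons huv (cons hvw (cons hwu nil))).IsCycle := by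
  simp [isCycle_def, huv.ne, hvw.ne, hwu.ne, huv.ne.symm, hwu.ne.symm]

variable {G : SimpleGraph α} {H : SimpleGraph β}

lemma Adj.strongProd_left {a a' : α} (h : G.Adj a a') (b : β) :
    (strongProd G H).Adj (a, b) (a', b) :=
  Or.inl ⟨h, rfl⟩

lemma Adj.strongProd_right (a : α) {b b' : β} (h : H.Adj b b') :
    (strongProd G H).Adj (a, b) (a, b') :=
  Or.inr (Or.inl ⟨rfl, h⟩)

lemma Adj.strongProd {a a' : α} {b b' : β} (hG : G.Adj a a') (hH : H.Adj b b') :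
    (strongProd G H).Adj (a, b) (a', b') :=
  Or.inr (Or.inr ⟨hG, hH⟩)

end SimpleGraph

open SimpleGraph

section CycleConvex

variable {G : SimpleGraph V} {S : Set V}

lemma CycleConvex.of_pairwise_not_adj (hS : S.Pairwise fun a b => ¬ G.Adj a b) :
    CycleConvex G S := by
  intro w hw c hc
  have hlen := hc.three_le_length
  have hmem : ∀ i, 0 < i → i < c.length → (c.getVert i).val ∈ S := fun i hi hic =>
    (c.getVert i).prop.resolve_left fun h =>
      absurd ((hc.getVert_endpoint_iff hic.le).1 (Subtype.ext h)) (by omega)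
  have hadj : G.Adj (c.getVert 1) (c.getVert 2) := c.adj_getVert_succ (i := 1) (by omega)
  exact hS (hmem 1 (by omega) (by omega)) (hmem 2 (by omega) (by omega)) hadj.ne hadj

lemma CycleConvex.mem_of_adj_of_adj (hS : CycleConvex G S) {x y w : V} (hx : x ∈ S)
    (hy : y ∈ S) (hxy : G.Adj x y) (hwx : G.Adj w x) (hwy : G.Adj w y) : w ∈ S := by
  by_contra hw
  have hwx' : (G.induce (insert w S)).Adj ⟨w, Set.mem_insert w S⟩ ⟨x, .inr hx⟩ := hwx
  have hxy' : (G.induce (insert w S)).Adj ⟨x, .inr hx⟩ ⟨y, .inr hy⟩ := hxy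
  have hyw' : (G.induce (insert w S)).Adj ⟨y, .inr hy⟩ ⟨w, Set.mem_insert w S⟩ := hwy.symm
  exact hS w hw _ (Walk.isCycle_triangle hwx' hxy' hyw')

end CycleConvex

section StrongProd

variable {G : SimpleGraph α} {H : SimpleGraph β} {S : Set (α × β)}

lemma CycleConvex.exists_strongProd_vertical_edge [Nontrivial β] (hH : H.Preconnected)
    (hS : CycleConvex (strongProd G H) S) {u v : α × β} (hu : u ∈ S) (hv : v ∈ S)
    (huv : (strongProd G H).Adj u v) :
    ∃ a b b', H.Adj b b' ∧ (a, b) ∈ S ∧ (a, b') ∈ S := by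
  obtain ⟨a, b⟩ := u
  obtain ⟨a', b'⟩ := v
  rcases huv with ⟨ha, rfl : b = b'⟩ | ⟨rfl : a = a', hb⟩ | ⟨ha, hb⟩
  · obtain ⟨b', hb⟩ := hH.exists_adj_of_nontrivial b
    exact ⟨a, b, b', hb, hu, hS.mem_of_adj_of_adj hu hv (ha.strongProd_left b)
      (hb.symm.strongProd_right a) (ha.strongProd hb.symm)⟩
  · exact ⟨a, b, b', hb, hu, hv⟩
  · exact ⟨a, b, b', hb, hu, hS.mem_of_adj_of_adj hu hv (ha.strongProd hb)
      (hb.symm.strongProd_right a) (ha.strongProd_left b')⟩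

lemma CycleConvex.strongProd_mem_row (hG : G.Preconnected)
    (hS : CycleConvex (strongProd G H) S) {a : α} {b b' : β} (hb : H.Adj b b')
    (hab : (a, b) ∈ S) (hab' : (a, b') ∈ S) (c : α) : (c, b) ∈ S := by
  refine (hG.induction_on (P := fun c => (c, b) ∈ S ∧ (c, b') ∈ S) ?_ ⟨hab, hab'⟩ c).1
  rintro c c' hc ⟨hcb, hcb'⟩
  have hedge := hb.strongProd_right (G := G) c
  exact ⟨hS.mem_of_adj_of_adj hcb hcb' hedge (hc.symm.strongProd_left b) (hc.symm.strongProd hb),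
    hS.mem_of_adj_of_adj hcb hcb' hedge (hc.symm.strongProd hb.symm)
      (hc.symm.strongProd_left b')⟩

lemma CycleConvex.strongProd_eq_univ [Nontrivial α] [Nontrivial β] (hG : G.Preconnected)
    (hH : H.Preconnected) (hS : CycleConvex (strongProd G H) S) {u v : α × β} (hu : u ∈ S)
    (hv : v ∈ S) (huv : (strongProd G H).Adj u v) : S = Set.univ := by
  obtain ⟨a, b, b', hb, hab, hab'⟩ := hS.exists_strongProd_vertical_edge hH hu hv huv
  refine Set.eq_univ_of_forall fun ⟨c, d⟩ =>
    hH.induction_on (P := fun d => ∀ c, (c, d) ∈ S) ?_ (hS.strongProd_mem_row hG hb hab hab') d c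
  intro d d' hd hrow c
  obtain ⟨c', hc⟩ := hG.exists_adj_of_nontrivial c
  exact hS.mem_of_adj_of_adj (hrow c) (hrow c') (hc.strongProd_left d)
    (hd.symm.strongProd_right c) (hc.strongProd hd.symm)

lemma cycleConvex_strongProd_and_ne_univ_iff [Nontrivial α] [Nontrivial β]
    (hG : G.Preconnected) (hH : H.Preconnected) :
    CycleConvex (strongProd G H) S ∧ S ≠ Set.univ ↔
      S.Pairwise fun u v => ¬ (strongProd G H).Adj u v := by
  refine ⟨fun ⟨hS, hne⟩ u hu v hv _ huv => hne (hS.strongProd_eq_univ hG hH hu hv huv),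
    fun hS => ⟨.of_pairwise_not_adj hS, ?_⟩⟩
  rintro rfl
  obtain ⟨a, b⟩ : α × β := Classical.arbitrary _
  obtain ⟨a', ha⟩ := hG.exists_adj_of_nontrivial a
  have hedge := ha.strongProd_left (H := H) b
  exact hS (Set.mem_univ _) (Set.mem_univ _) hedge.ne hedge

end StrongProd

theorem stmt_14_general (G : SimpleGraph α) (H : SimpleGraph β)
    [Nontrivial α] [Nontrivial β] (hG : G.Connected) (hH : H.Connected) :
    cycleConvexityNumber (strongProd G H) = indepNumber (strongProd G H) := by
  unfold cycleConvexityNumber indepNumber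
  congr 1
  ext n
  exact exists_congr fun S => and_congr_right fun _ =>
    cycleConvex_strongProd_and_ne_univ_iff hG.preconnected hH.preconnected

theorem stmt_14 [Fintype α] [Fintype β] (G : SimpleGraph α) (H : SimpleGraph β)
    [Nontrivial α] [Nontrivial β] (hG : G.Connected) (hH : H.Connected) :
    cycleConvexityNumber (strongProd G H) = indepNumber (strongProd G H) :=
  stmt_14_general G H hG hH
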